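/- arXiv:0904.4808 — 4 statements merged into one kernel-verified Lean document; each statement's English description precedes it below -/
import Mathlib

section
/- For every nonzero g ∈ G₂, the set { (1/m_a) · Σ_{i=0}^{m_a−1} a(σ^i(g)) : a ∈ 𝒢 } of complex numbers is infinite. -/
/-- `G₂ := ⊕_{i ∈ ℤ} ℤ/2ℤ`, realized as finitely supported functions `ℤ →₀ ZMod 2`. -/
abbrev Gtwo : Type := ℤ →₀ ZMod 2

/-- `G₂` carries the discrete topology. -/
instance : TopologicalSpace Gtwo := ⊥
instance : DiscreteTopology Gtwo := ⟨rfl⟩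

/-- The shift automorphism `σ` of `G₂`, `(σ g)(i) = g (i+1)`. -/
def shiftAut : AddAut Gtwo := Finsupp.domCongr (Equiv.subRight (1 : ℤ))

/-- The Pontryagin dual `Ĝ₂` of `G₂`: continuous characters with values in the circle group,
with the compact-open topology. -/
abbrev DualGtwo : Type := PontryaginDual (Multiplicative Gtwo)

/-- `𝒢_m := { a ∈ Ĝ₂ : a ∘ σ^m = a }`. -/
def Gm (m : ℕ) : Set DualGtwo :=
  {a | ∀ g : Gtwo, a (Multiplicative.ofAdd ((m • shiftAut) g)) = a (Multiplicative.ofAdd g)}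

/-- `𝒢 := ⋃_{m ≥ 1} 𝒢_m`. -/
def curlyG : Set DualGtwo := ⋃ m ∈ {m : ℕ | 1 ≤ m}, Gm m


-- auxiliary
noncomputable def negOne : Circle := ⟨-1, by simp [Submonoid.unitSphere]⟩

@[simp] lemma negOne_coe : (negOne : ℂ) = -1 := rfl

lemma negOne_mul_negOne : negOne * negOne = 1 := by
  ext; simp

lemma negOne_ne_one : negOne ≠ 1 := by
  intro h
  have := congrArg (fun z : Circle => (z : ℂ)) h
  simp at this
  norm_num at this

/-- the character `Multiplicative (ZMod 2) →* Circle` sending `1 ↦ -1`. -/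
noncomputable def chi : Multiplicative (ZMod 2) →* Circle where
  toFun x := if x.toAdd = 0 then 1 else negOne
  map_one' := by simp
  map_mul' a b := by
    have h : ∀ x : ZMod 2, x = 0 ∨ x = 1 := by decide
    rcases h a.toAdd with ha | ha <;> rcases h b.toAdd with hb | hb <;>
      simp [toAdd_mul, ha, hb, negOne_mul_negOne, show ((1:ZMod 2)+1 = 0) from by decide]

noncomputable def phi (m : ℕ) (r : ℤ) : Gtwo →+ ZMod 2 :=
  Finsupp.liftAddHom fun j => if (m : ℤ) ∣ (j - r) then AddMonoidHom.id (ZMod 2) else 0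

lemma phi_single (m : ℕ) (r j : ℤ) (c : ZMod 2) :
    phi m r (Finsupp.single j c) = if (m : ℤ) ∣ (j - r) then c else 0 := by
  rw [phi, Finsupp.liftAddHom_apply_single]
  split_ifs <;> rfl

lemma phi_apply (m : ℕ) (r : ℤ) (x : Gtwo) :
    phi m r x = ∑ j ∈ x.support, if (m : ℤ) ∣ (j - r) then x j else 0 := by
  rw [phi, Finsupp.liftAddHom_apply, Finsupp.sum]
  refine Finset.sum_congr rfl fun j _ => ?_
  split_ifs <;> rfl

lemma shift_apply (n : ℕ) (x : Gtwo) (i : ℤ) : ((n • shiftAut) x) i = x (i + n) := by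
  induction n generalizing i with
  | zero => simp
  | succ n ih =>
    rw [succ_nsmul']
    have h1 : ((shiftAut + n • shiftAut) x) i = ((n • shiftAut) x) (i + 1) := rfl
    rw [h1, ih]
    congr 1
    push_cast
    ring

lemma shift_single (n : ℕ) (j : ℤ) (c : ZMod 2) :
    (n • shiftAut) (Finsupp.single j c) = Finsupp.single (j - n) c := by
  ext i
  rw [shift_apply]
  rw [Finsupp.single_apply, Finsupp.single_apply]
  refine if_congr ?_ rfl rfl
  omega

/-- The character built from `phi m 0`. -/
noncomputable def chr (m : ℕ) : DualGtwo :=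
  { toMonoidHom := chi.comp (AddMonoidHom.toMultiplicative (phi m 0)),
    continuous_toFun := continuous_of_discreteTopology }

lemma chr_apply (m : ℕ) (x : Gtwo) :
    chr m (Multiplicative.ofAdd x) = chi (Multiplicative.ofAdd (phi m 0 x)) := rfl

lemma phi_shift (m n : ℕ) (x : Gtwo) :
    phi m 0 ((n • shiftAut) x) = phi m (n : ℤ) x := by
  have h : (phi m 0).comp ((n • shiftAut : AddAut Gtwo) : Gtwo →+ Gtwo) = phi m (n : ℤ) := by
    apply Finsupp.addHom_ext
    intro j c
    simp only [AddMonoidHom.coe_comp, Function.comp_apply]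
    rw [show ((n • shiftAut : AddAut Gtwo) : Gtwo →+ Gtwo) (Finsupp.single j c)
        = (n • shiftAut) (Finsupp.single j c) from rfl, shift_single, phi_single, phi_single,
      sub_zero]
  exact DFunLike.congr_fun h x

lemma phi_self (m : ℕ) (x : Gtwo) : phi m (m : ℤ) x = phi m 0 x := by
  rw [phi_apply, phi_apply]
  refine Finset.sum_congr rfl fun j _ => ?_
  refine if_congr ?_ rfl rfl
  rw [sub_zero]
  constructor
  · intro h; have := dvd_add h (dvd_refl (m : ℤ)); simpa using this
  · intro h; exact dvd_sub h (dvd_refl _)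

lemma chr_mem_Gm (m : ℕ) : chr m ∈ Gm m := by
  intro x
  rw [chr_apply, chr_apply, phi_shift, phi_self]

lemma chr_single (m : ℕ) (j : ℤ) :
    chr m (Multiplicative.ofAdd (Finsupp.single j 1)) =
      if (m : ℤ) ∣ j then negOne else 1 := by
  rw [chr_apply, phi_single, sub_zero]
  split_ifs with h
  · show chi (Multiplicative.ofAdd (1 : ZMod 2)) = negOne
    simp [chi, show ((1 : ZMod 2) = 0) = False from by simp]
  · show chi (Multiplicative.ofAdd (0 : ZMod 2)) = 1
    simp [chi]

lemma chr_isLeast (m : ℕ) (hm : 1 ≤ m) :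
    IsLeast {m' : ℕ | 1 ≤ m' ∧ ∀ x : Gtwo,
      chr m (Multiplicative.ofAdd ((m' • shiftAut) x)) = chr m (Multiplicative.ofAdd x)} m := by
  constructor
  · exact ⟨hm, chr_mem_Gm m⟩
  · rintro b ⟨hb1, hb⟩
    by_contra hlt
    push_neg at hlt
    have key := hb (Finsupp.single (b : ℤ) 1)
    rw [shift_single, sub_self] at key
    rw [chr_single, chr_single] at key
    have h1 : (m : ℤ) ∣ 0 := dvd_zero _
    have h2 : ¬ (m : ℤ) ∣ (b : ℤ) := by
      intro h
      rw [Int.natCast_dvd_natCast] at h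
      exact absurd (Nat.le_of_dvd (by omega) h) (by omega)
    rw [if_pos h1, if_neg h2] at key
    exact negOne_ne_one key

lemma chi_one_val : chi (Multiplicative.ofAdd (1 : ZMod 2)) = negOne := by
  simp [chi, show ((1 : ZMod 2) = 0) = False from by simp]

lemma chi_zero_val : chi (Multiplicative.ofAdd (0 : ZMod 2)) = 1 := by
  simp [chi]

open Classical in
lemma chr_shift_val (m : ℕ) (g : Gtwo) (i : ℕ)
    (hsep : ∀ j ∈ g.support, ∀ j' ∈ g.support, (m : ℤ) ∣ j - j' → j = j') :
    chr m (Multiplicative.ofAdd ((i • shiftAut) g)) =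
      if ∃ j ∈ g.support, (m : ℤ) ∣ j - (i : ℤ) then negOne else 1 := by
  rw [chr_apply, phi_shift]
  by_cases hex : ∃ j ∈ g.support, (m : ℤ) ∣ j - (i : ℤ)
  · obtain ⟨j0, hj0, hd⟩ := hex
    have hsum : phi m (i : ℤ) g = 1 := by
      rw [phi_apply]
      rw [Finset.sum_eq_single_of_mem j0 hj0 ?_]
      · rw [if_pos hd]
        have hne := Finsupp.mem_support_iff.1 hj0
        revert hne; generalize g j0 = x; revert x; decide
      · intro j hj hne
        rw [if_neg]
        intro hd'
        exact hne (hsep j hj j0 hj0 (by simpa using dvd_sub hd' hd))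
    rw [hsum, if_pos ⟨j0, hj0, hd⟩]
    exact chi_one_val
  · have hsum : phi m (i : ℤ) g = 0 := by
      rw [phi_apply]
      refine Finset.sum_eq_zero fun j hj => ?_
      rw [if_neg]
      exact fun hd => hex ⟨j, hj, hd⟩
    rw [hsum, if_neg hex]
    exact chi_zero_val

open Classical in
lemma count_eq (m : ℕ) (hm : 0 < m) (g : Gtwo)
    (hsep : ∀ j ∈ g.support, ∀ j' ∈ g.support, (m : ℤ) ∣ j - j' → j = j') :
    ((Finset.range m).filter fun i : ℕ => ∃ j ∈ g.support, (m : ℤ) ∣ j - (i : ℤ)).card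
      = g.support.card := by
  symm
  refine Finset.card_bij (fun j _ => (j % (m : ℤ)).toNat) ?_ ?_ ?_
  · intro j hj
    have h0 : (0 : ℤ) < m := by exact_mod_cast hm
    have hnn : 0 ≤ j % (m : ℤ) := Int.emod_nonneg j (by omega)
    have hlt : j % (m : ℤ) < m := Int.emod_lt_of_pos j h0
    rw [Finset.mem_filter, Finset.mem_range]
    refine ⟨by omega, j, hj, ?_⟩
    beta_reduce
    rw [Int.toNat_of_nonneg hnn]
    have he : j - j % (m : ℤ) = m * (j / m) := by rw [Int.emod_def]; ring
    exact he ▸ Dvd.intro _ rfl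
  · intro j hj j' hj' h
    have h0 : (0 : ℤ) < m := by exact_mod_cast hm
    have hnn : 0 ≤ j % (m : ℤ) := Int.emod_nonneg j (by omega)
    have hnn' : 0 ≤ j' % (m : ℤ) := Int.emod_nonneg j' (by omega)
    beta_reduce at h
    have heq : j % (m : ℤ) = j' % (m : ℤ) := by omega
    have hd : (m : ℤ) ∣ j' - j := Int.ModEq.dvd heq
    exact (hsep j' hj' j hj hd).symm
  · intro i hi
    rw [Finset.mem_filter, Finset.mem_range] at hi
    obtain ⟨hilt, j, hj, hd⟩ := hi
    refine ⟨j, hj, ?_⟩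
    beta_reduce
    have h1 : (i : ℤ) % (m : ℤ) = j % (m : ℤ) := Int.modEq_iff_dvd.2 hd
    have h2 : (i : ℤ) % (m : ℤ) = i := Int.emod_eq_of_lt (by positivity) (by exact_mod_cast hilt)
    rw [← h1, h2]
    simp


/-- For every nonzero `g ∈ G₂`, the set
`{ (1/m_a) · Σ_{i=0}^{m_a−1} a(σ^i(g)) : a ∈ 𝒢 } ⊆ ℂ` is infinite, where `m_a` is the least
`m ≥ 1` with `a ∘ σ^m = a`. -/
theorem stmt_7 (g : Gtwo) (hg : g ≠ 0) :
    {z : ℂ | ∃ a ∈ curlyG, ∃ m : ℕ,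
      IsLeast {m' : ℕ | 1 ≤ m' ∧ ∀ x : Gtwo,
        a (Multiplicative.ofAdd ((m' • shiftAut) x)) = a (Multiplicative.ofAdd x)} m ∧
      z = (m : ℂ)⁻¹ *
        ∑ i ∈ Finset.range m, ((a (Multiplicative.ofAdd ((i • shiftAut) g)) : Circle) : ℂ)
      }.Infinite := by
  classical
  have hSne : g.support.Nonempty := Finsupp.support_nonempty_iff.2 hg
  set K : ℕ := g.support.sup fun j => j.natAbs with hK
  set c : ℕ := g.support.card with hc
  have hc1 : 1 ≤ c := Finset.card_pos.2 hSne
  have hsep : ∀ n : ℕ, ∀ j ∈ g.support, ∀ j' ∈ g.support,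
      ((2 * K + 1 + n : ℕ) : ℤ) ∣ j - j' → j = j' := by
    intro n j hj j' hj' hd
    have hb : j.natAbs ≤ K := Finset.le_sup (f := fun j : ℤ => j.natAbs) hj
    have hb' : j'.natAbs ≤ K := Finset.le_sup (f := fun j : ℤ => j.natAbs) hj'
    have hd' : (2 * K + 1 + n) ∣ (j - j').natAbs := by
      have h2 := Int.natAbs_dvd_natAbs.mpr hd
      rwa [Int.natAbs_natCast] at h2
    have hlt : (j - j').natAbs < 2 * K + 1 + n := by omega
    have : (j - j').natAbs = 0 := by
      by_contra h0
      exact absurd (Nat.le_of_dvd (by omega) hd') (by omega)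
    omega
  apply Set.infinite_of_injective_forall_mem
    (f := fun n : ℕ => ((2 * K + 1 + n : ℕ) : ℂ)⁻¹ * (((2 * K + 1 + n : ℕ) : ℂ) - 2 * c))
  · -- injectivity
    intro n1 n2 h
    simp only at h
    have key : ∀ m1 m2 : ℕ, 0 < m1 → 0 < m2 →
        ((m1 : ℕ) : ℂ)⁻¹ * (((m1 : ℕ) : ℂ) - 2 * c) =
          ((m2 : ℕ) : ℂ)⁻¹ * (((m2 : ℕ) : ℂ) - 2 * c) → m1 = m2 := by
      intro m1 m2 h1 h2 hEq
      have hm1 : ((m1 : ℕ) : ℂ) ≠ 0 := Nat.cast_ne_zero.2 (by omega)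
      have hm2 : ((m2 : ℕ) : ℂ) ≠ 0 := Nat.cast_ne_zero.2 (by omega)
      rw [mul_sub, mul_sub, inv_mul_cancel₀ hm1, inv_mul_cancel₀ hm2] at hEq
      have h3 : ((m1 : ℕ) : ℂ)⁻¹ * (2 * c) = ((m2 : ℕ) : ℂ)⁻¹ * (2 * c) := by
        linear_combination -hEq
      have hcc : (2 * (c : ℂ)) ≠ 0 :=
        mul_ne_zero two_ne_zero (Nat.cast_ne_zero.2 (by omega))
      have h4 : ((m1 : ℕ) : ℂ)⁻¹ = ((m2 : ℕ) : ℂ)⁻¹ := mul_right_cancel₀ hcc h3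
      exact_mod_cast inv_inj.mp h4
    have := key _ _ (by omega) (by omega) h
    omega
  · -- membership
    intro n
    set m : ℕ := 2 * K + 1 + n with hm
    have hm1 : 1 ≤ m := by omega
    refine ⟨chr m, ?_, m, chr_isLeast m hm1, ?_⟩
    · rw [curlyG]
      exact Set.mem_biUnion (show m ∈ {m : ℕ | 1 ≤ m} from hm1) (chr_mem_Gm m)
    · have hsum : ∑ i ∈ Finset.range m,
          ((chr m (Multiplicative.ofAdd ((i • shiftAut) g)) : Circle) : ℂ)
          = ((m : ℕ) : ℂ) - 2 * c := by
        have hterm : ∀ i ∈ Finset.range m,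
            ((chr m (Multiplicative.ofAdd ((i • shiftAut) g)) : Circle) : ℂ)
            = 1 - 2 * (if ∃ j ∈ g.support, (m : ℤ) ∣ j - (i : ℤ) then (1 : ℂ) else 0) := by
          intro i _
          rw [chr_shift_val m g i (hsep n)]
          split_ifs <;> simp <;> norm_num
        rw [Finset.sum_congr rfl hterm, Finset.sum_sub_distrib, Finset.sum_const,
          Finset.card_range, ← Finset.mul_sum, Finset.sum_boole,
          count_eq m (by omega) g (hsep n)]
        simp only [hm, hc]
        push_cast
        ring
      rw [hsum]
end

section
/- Let g ∈ G₂ be nonzero, let j be the cardinality of its support { i ∈ ℤ : g(i) ≠ 0 }, and let m ≥ 1 be such that the elements of the support of g are pairwise incongruent modulo m. Define a : G₂ → ℂ by a(x) := (−1)^{N(x)}, where N(x) := Σ_{i ∈ ℤ, m ∣ i} x(i), the summands x(i) ∈ ℤ/2ℤ being lifted to {0,1} ⊆ ℤ (the sum is finite since x has finite support). Then a is a character of G₂ (a group homomorphism into the unit circle) satisfying a ∘ σ^m = a, and Σ_{i=0}^{m−1} a(σ^i(g)) = m − 2j. -/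
lemma shiftAut_pow_apply (k : ℕ) (x : Gtwo) (i : ℤ) :
    ((k • shiftAut) x) i = x (i + k) := by
  induction k generalizing i with
  | zero => show x i = x (i + ((0:ℕ):ℤ)); simp
  | succ n ih =>
    have h : ((n+1) • shiftAut) x = shiftAut ((n • shiftAut) x) := by
      rw [succ_nsmul']; rfl
    rw [h]
    show ((n • shiftAut) x) ((Equiv.subRight (1:ℤ)).symm i) = x (i + (n+1))
    rw [ih]
    simp [Equiv.subRight]
    ring_nf

/-- The parity of the sum of values of `x` on multiples of `m`. -/
def Pfun (m : ℕ) (x : Gtwo) : ZMod 2 :=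
  ∑ i ∈ x.support.filter (fun i => (m : ℤ) ∣ i), x i

lemma Pfun_eq_sum (m : ℕ) (x : Gtwo) :
    Pfun m x = x.sum (fun i v => if (m : ℤ) ∣ i then v else 0) := by
  rw [Pfun, Finset.sum_filter]; rfl

lemma Pfun_add (m : ℕ) (x y : Gtwo) : Pfun m (x + y) = Pfun m x + Pfun m y := by
  simp only [Pfun_eq_sum]
  exact Finsupp.sum_add_index' (fun a => by simp) (fun a b c => by split <;> simp)

lemma Pfun_shift (m : ℕ) (k : ℕ) (x : Gtwo) :
    Pfun m ((k • shiftAut) x)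
      = ∑ j ∈ x.support.filter (fun j => (m : ℤ) ∣ j - k), x j := by
  rw [Pfun]
  refine Finset.sum_nbij' (fun a => a + (k : ℤ)) (fun b => b - (k : ℤ)) ?_ ?_ ?_ ?_ ?_
  · intro a ha
    simp only [Finset.mem_filter, Finsupp.mem_support_iff, shiftAut_pow_apply] at ha ⊢
    exact ⟨ha.1, by simpa using ha.2⟩
  · intro b hb
    simp only [Finset.mem_filter, Finsupp.mem_support_iff, shiftAut_pow_apply] at hb ⊢
    rw [sub_add_cancel]
    exact ⟨hb.1, hb.2⟩
  · intro a _; ring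
  · intro b _; ring
  · intro a ha
    rw [shiftAut_pow_apply]

/-- The sign character on `ZMod 2`. -/
def eps (c : ZMod 2) : ℂ := (-1 : ℂ) ^ c.val

lemma eps_natCast (n : ℕ) : eps (n : ZMod 2) = (-1 : ℂ) ^ n := by
  rw [eps, ZMod.val_natCast]
  exact (neg_one_pow_eq_pow_mod_two (R := ℂ) n).symm

lemma zmod2_cases : ∀ c : ZMod 2, c = 0 ∨ c = 1 := by decide

lemma eps_add (c d : ZMod 2) : eps (c + d) = eps c * eps d := by
  rcases zmod2_cases c with rfl | rfl <;> rcases zmod2_cases d with rfl | rfl <;>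
    norm_num [eps, show ZMod.val (2 : ZMod 2) = 0 from rfl, ZMod.val_zero, ZMod.val_one]

lemma eps_norm (c : ZMod 2) : ‖eps c‖ = 1 := by
  rcases zmod2_cases c with rfl | rfl <;> norm_num [eps, ZMod.val_zero, ZMod.val_one]

lemma count_lemma (g : Gtwo) (m : ℕ) (hm : 1 ≤ m) :
    ∑ i ∈ Finset.range m, (g.support.filter (fun j => (m : ℤ) ∣ j - i)).card
      = g.support.card := by
  have hm' : (0 : ℤ) < (m : ℤ) := by exact_mod_cast hm
  simp only [Finset.card_filter]
  rw [Finset.sum_comm]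
  rw [show g.support.card = ∑ _j ∈ g.support, 1 from (Finset.card_eq_sum_ones _)]
  refine Finset.sum_congr rfl fun j hj => ?_
  have key : ∀ i ∈ Finset.range m, ((m : ℤ) ∣ j - i ↔ i = (j % m).toNat) := by
    intro i hi
    rw [Finset.mem_range] at hi
    have h0 : (0 : ℤ) ≤ j % m := Int.emod_nonneg _ (by omega)
    have h1 : j % m < m := Int.emod_lt_of_pos _ hm'
    constructor
    · intro hdvd
      have h2 : (i : ℤ) % m = j % m := Int.modEq_iff_dvd.mpr hdvd
      have h3 : (i : ℤ) % m = i :=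
        Int.emod_eq_of_lt (by positivity) (by exact_mod_cast hi)
      omega
    · intro hi2
      have h4 : (i : ℤ) = j % m := by omega
      have h5 : j % m = j - m * (j / m) := by rw [Int.emod_def]
      exact ⟨j / m, by omega⟩
  rw [Finset.sum_congr rfl fun i hi => if_congr (key i hi) rfl rfl]
  rw [Finset.sum_ite_eq' (Finset.range m) ((j % m).toNat) (fun _ => 1)]
  have h0 : (0 : ℤ) ≤ j % m := Int.emod_nonneg _ (by omega)
  have h1 : j % m < m := Int.emod_lt_of_pos _ hm'
  rw [if_pos (Finset.mem_range.mpr (by omega))]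

/-- Let `g ∈ G₂` be nonzero with support of cardinality `j`, and let `m ≥ 1` be
such that the elements of the support of `g` are pairwise incongruent modulo `m`. Define
`a(x) := (−1)^{N(x)}` where `N(x) := Σ_{i ∈ ℤ, m ∣ i} x(i)` (values lifted to `{0,1} ⊆ ℤ`).
Then `a` is a character of `G₂` with values in the unit circle satisfying `a ∘ σ^m = a`, and
`Σ_{i=0}^{m−1} a(σ^i(g)) = m − 2j`. -/
theorem stmt_8 (g : Gtwo) (hg : g ≠ 0) (m : ℕ) (hm : 1 ≤ m)
    (hincong : ∀ i ∈ g.support, ∀ j ∈ g.support, i ≡ j [ZMOD (m : ℤ)] → i = j)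
    (N : Gtwo → ℕ)
    (hN : ∀ x : Gtwo, N x = ∑ i ∈ x.support.filter (fun i => (m : ℤ) ∣ i), (x i).val)
    (a : Gtwo → ℂ) (ha : ∀ x : Gtwo, a x = (-1 : ℂ) ^ N x) :
    (∀ x y : Gtwo, a (x + y) = a x * a y) ∧
    (∀ x : Gtwo, ‖a x‖ = 1) ∧
    (∀ x : Gtwo, a ((m • shiftAut) x) = a x) ∧
    ∑ i ∈ Finset.range m, a ((i • shiftAut) g) = (m : ℂ) - 2 * (g.support.card : ℂ) := by
  -- `a x = eps (Pfun m x)`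
  have haeps : ∀ x : Gtwo, a x = eps (Pfun m x) := by
    intro x
    rw [ha, hN, ← eps_natCast]
    congr 1
    rw [Nat.cast_sum, Pfun]
    exact Finset.sum_congr rfl fun i _ => by simp [ZMod.natCast_val, ZMod.cast_id]
  refine ⟨?_, ?_, ?_, ?_⟩
  · intro x y
    rw [haeps, haeps, haeps, Pfun_add, eps_add]
  · intro x
    rw [haeps]; exact eps_norm _
  · intro x
    rw [haeps, haeps, Pfun_shift]
    congr 1
    rw [Pfun]
    refine Finset.sum_congr ?_ fun _ _ => rfl
    ext j
    simp only [Finset.mem_filter]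
    constructor
    · rintro ⟨h1, h2⟩
      exact ⟨h1, by have := dvd_add h2 (dvd_refl (m : ℤ)); simpa using this⟩
    · rintro ⟨h1, h2⟩
      exact ⟨h1, dvd_sub h2 (dvd_refl _)⟩
  · -- for each `i`, `a ((i • shiftAut) g) = 1 - 2 * card(T i)`
    have hval : ∀ i : ℕ,
        a ((i • shiftAut) g)
          = 1 - 2 * ((g.support.filter (fun j => (m : ℤ) ∣ j - i)).card : ℂ) := by
      intro i
      rw [haeps, Pfun_shift]
      set T := g.support.filter (fun j => (m : ℤ) ∣ j - i) with hT
      have hcard : T.card ≤ 1 := by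
        rw [Finset.card_le_one]
        intro p hp q hq
        rw [hT, Finset.mem_filter] at hp hq
        refine hincong p hp.1 q hq.1 ?_
        have : (m : ℤ) ∣ q - p := by
          have := dvd_sub hq.2 hp.2
          simpa using this
        exact (Int.modEq_iff_dvd.mpr this)
      have hone : ∀ j ∈ T, g j = 1 := by
        intro j hj
        rw [hT, Finset.mem_filter, Finsupp.mem_support_iff] at hj
        have : ∀ c : ZMod 2, c ≠ 0 → c = 1 := by decide
        exact this _ hj.1
      have hsum : ∑ j ∈ T, g j = (T.card : ZMod 2) := by
        rw [Finset.sum_congr rfl hone, Finset.sum_const, nsmul_eq_mul, mul_one]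
      rw [hsum]
      interval_cases h : T.card
      · norm_num [eps, ZMod.val_zero]
      · norm_num [eps, ZMod.val_one]
    rw [Finset.sum_congr rfl fun i _ => hval i]
    rw [Finset.sum_sub_distrib, Finset.sum_const, Finset.card_range, nsmul_eq_mul, mul_one,
      ← Finset.mul_sum, ← Nat.cast_sum, count_lemma g m hm]
end

section
/- Let U be a unitary operator on a complex Hilbert space and let (n_t)_{t≥1} be a sequence of natural numbers such that U^{n_t} → (1/2)(I + U*) in the weak operator topology as t → ∞. Then every eigenvalue of U equals 1: if U f = λ·f for some nonzero vector f and some λ ∈ ℂ, then λ = 1. -/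
open scoped ComplexInnerProductSpace

lemma aux_circle (z : ℂ) (hz : ‖z‖ = 1) (h : ‖1 + z‖ = 2) : z = 1 := by
  have h1 : Complex.normSq z = 1 := by
    have := Complex.sq_norm z
    rw [show ‖z‖ = 1 from hz] at this
    nlinarith [this]
  have h2 : Complex.normSq (1 + z) = 4 := by
    have := Complex.sq_norm (1 + z)
    rw [show ‖1 + z‖ = 2 from h] at this
    nlinarith [this]
  simp [Complex.normSq_apply] at h1 h2
  apply Complex.ext <;> simp <;> nlinarith

/-- If `U` is a unitary operator on a complex Hilbert space and
`U^{n_t} → (1/2)(I + U*)` in the weak operator topology, then every eigenvalue of `U` is `1`. -/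
theorem stmt_13 {H : Type*} [NormedAddCommGroup H] [InnerProductSpace ℂ H] [CompleteSpace H]
    (U : H ≃ₗᵢ[ℂ] H) (n : ℕ → ℕ)
    (hconv : ∀ f g : H,
      Filter.Tendsto (fun t => ⟪(U ^ n t) f, g⟫) Filter.atTop
        (nhds ⟪(1 / 2 : ℂ) • (f + U.symm f), g⟫))
    (f : H) (hf : f ≠ 0) (lam : ℂ) (hUf : U f = lam • f) : lam = 1 := by
  have hfn : ‖f‖ ≠ 0 := norm_ne_zero_iff.mpr hf
  have hlam1 : ‖lam‖ = 1 := by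
    have := U.norm_map f
    rw [hUf, norm_smul] at this
    field_simp at this
    exact this
  have hlam0 : lam ≠ 0 := by
    intro h; rw [h] at hlam1; simp at hlam1
  have hsymm : U.symm f = lam⁻¹ • f := by
    have h1 : U.symm (U f) = U.symm (lam • f) := by rw [hUf]
    rw [U.symm_apply_apply, map_smul] at h1
    rw [eq_comm, inv_smul_eq_iff₀ hlam0]
    exact h1
  have hpow : ∀ k : ℕ, (U ^ k) f = lam ^ k • f := by
    intro k
    induction k with
    | zero => simp
    | succ m ih =>
      rw [pow_succ, pow_succ]
      have : (U ^ m * U) f = (U ^ m) (U f) := rfl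
      rw [this, hUf, map_smul, ih, smul_smul, mul_comm]
  have hc := hconv f f
  simp only [hpow, hsymm, inner_smul_left, inner_add_left] at hc
  -- hc : Tendsto (fun t => conj (lam ^ n t) * ⟪f,f⟫) atTop (nhds (conj (1/2) * (⟪f,f⟫ + conj lam⁻¹ * ⟪f,f⟫)))
  have hinner : (⟪f, f⟫ : ℂ) ≠ 0 := by
    exact (inner_self_ne_zero (𝕜 := ℂ)).mpr hf
  have hnorm := hc.norm
  have hconst : Filter.Tendsto (fun t : ℕ => ‖(starRingEnd ℂ) (lam ^ n t) * ⟪f, f⟫‖)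
      Filter.atTop (nhds ‖(⟪f, f⟫ : ℂ)‖) := by
    have : (fun t : ℕ => ‖(starRingEnd ℂ) (lam ^ n t) * ⟪f, f⟫‖) = fun _ => ‖(⟪f, f⟫ : ℂ)‖ := by
      funext t
      rw [norm_mul, RCLike.norm_conj, norm_pow, hlam1, one_pow, one_mul]
    rw [this]
    exact tendsto_const_nhds
  have heq := tendsto_nhds_unique hconst hnorm
  rw [norm_mul, RCLike.norm_conj] at heq
  have h12 : ‖(1/2 : ℂ)‖ = 1/2 := by norm_num
  have key : ‖(⟪f, f⟫ : ℂ) + (starRingEnd ℂ) lam⁻¹ * ⟪f, f⟫‖ = 2 * ‖(⟪f, f⟫ : ℂ)‖ := by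
    rw [h12] at heq
    have hif : ‖(⟪f, f⟫ : ℂ)‖ ≠ 0 := norm_ne_zero_iff.mpr hinner
    nlinarith [heq, norm_nonneg ((⟪f, f⟫ : ℂ) + (starRingEnd ℂ) lam⁻¹ * ⟪f, f⟫)]
  have hfact : (⟪f, f⟫ : ℂ) + (starRingEnd ℂ) lam⁻¹ * ⟪f, f⟫ = (1 + (starRingEnd ℂ) lam⁻¹) * ⟪f, f⟫ := by ring
  rw [hfact, norm_mul] at key
  have hif : ‖(⟪f, f⟫ : ℂ)‖ ≠ 0 := norm_ne_zero_iff.mpr hinner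
  have h2 : ‖1 + (starRingEnd ℂ) lam⁻¹‖ = 2 := mul_right_cancel₀ hif key
  have hz : ‖(starRingEnd ℂ) lam⁻¹‖ = 1 := by
    rw [RCLike.norm_conj, norm_inv, hlam1]; norm_num
  have := aux_circle _ hz h2
  have hinv : lam⁻¹ = 1 := by
    have := congrArg (starRingEnd ℂ) this
    simpa using this
  field_simp at hinv
  exact hinv.symm
end

section
/- Let (X,μ) be a probability space, and let T and S be invertible measure-preserving transformations of (X,μ) with S ∘ T = T ∘ S. Let K be a compact abelian topological group (written additively), v : K → K a continuous group automorphism, and a : X → K, φ : X → K measurable maps satisfying v(a(x)) = a(S x) + φ(x) − φ(T x) for μ-almost every x. For a continuous character ψ of K (a continuous homomorphism from K to the circle group, regarded as ℂ-valued), let U_{T,ψ} denote the unitary operator on L²(X,μ) given by (U_{T,ψ} f)(x) := ψ(a(x)) · f(T x). Then for every continuous character χ of K, the operators U_{T,χ∘v} and U_{T,χ} are unitarily equivalent, i.e., there is a unitary operator W on L²(X,μ) with W U_{T,χ} = U_{T,χ∘v} W. -/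
open MeasureTheory

section aux

variable {X : Type*} [MeasurableSpace X]

lemma wk_memLp (μ : Measure X) (S : X → X) (hS : MeasurePreserving S μ μ)
    (g : X → ℂ) (hg : Measurable g) (f : Lp ℂ 2 μ) (hgn : ∀ x, ‖g x‖ = 1) :
    MemLp (fun x => g x * f (S x)) 2 μ := by
  have hfS : MemLp (fun x => (f : X → ℂ) (S x)) 2 μ :=
    (Lp.memLp f).comp_measurePreserving hS
  refine hfS.of_le (hg.aestronglyMeasurable.mul hfS.1) ?_
  filter_upwards with x
  rw [norm_mul, hgn x, one_mul]

noncomputable def wk (μ : Measure X) (S : X → X) (hS : MeasurePreserving S μ μ)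
    (g : X → ℂ) (hg : Measurable g) (hgn : ∀ x, ‖g x‖ = 1) :
    Lp ℂ 2 μ →ₗ[ℂ] Lp ℂ 2 μ where
  toFun f := (wk_memLp μ S hS g hg f hgn).toLp _
  map_add' f₁ f₂ := by
    apply Lp.ext
    refine ((wk_memLp μ S hS g hg (f₁ + f₂) hgn).coeFn_toLp).trans ?_ |>.trans
      (Lp.coeFn_add ((wk_memLp μ S hS g hg f₁ hgn).toLp _) ((wk_memLp μ S hS g hg f₂ hgn).toLp _)).symm
    have h : (fun x => ((f₁ + f₂ : Lp ℂ 2 μ) : X → ℂ) (S x)) =ᵐ[μ]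
        fun x => (f₁ : X → ℂ) (S x) + (f₂ : X → ℂ) (S x) :=
      hS.quasiMeasurePreserving.ae_eq_comp (Lp.coeFn_add f₁ f₂)
    filter_upwards [h, MemLp.coeFn_toLp (wk_memLp μ S hS g hg f₁ hgn),
      MemLp.coeFn_toLp (wk_memLp μ S hS g hg f₂ hgn)] with x hx h1 h2
    simp only [Pi.add_apply, hx, h1, h2, mul_add]
  map_smul' c f := by
    apply Lp.ext
    refine ((wk_memLp μ S hS g hg (c • f) hgn).coeFn_toLp).trans ?_ |>.trans
      (Lp.coeFn_smul c ((wk_memLp μ S hS g hg f hgn).toLp _)).symm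
    have h : (fun x => ((c • f : Lp ℂ 2 μ) : X → ℂ) (S x)) =ᵐ[μ]
        fun x => c • (f : X → ℂ) (S x) :=
      hS.quasiMeasurePreserving.ae_eq_comp (Lp.coeFn_smul c f)
    filter_upwards [h, MemLp.coeFn_toLp (wk_memLp μ S hS g hg f hgn)] with x hx h1
    simp only [Pi.smul_apply, hx, h1, smul_eq_mul]
    ring

lemma wk_coeFn (μ : Measure X) (S : X → X) (hS : MeasurePreserving S μ μ)
    (g : X → ℂ) (hg : Measurable g) (hgn : ∀ x, ‖g x‖ = 1) (f : Lp ℂ 2 μ) :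
    (wk μ S hS g hg hgn f : X → ℂ) =ᵐ[μ] fun x => g x * f (S x) :=
  (wk_memLp μ S hS g hg f hgn).coeFn_toLp

lemma wk_norm (μ : Measure X) (S : X → X) (hS : MeasurePreserving S μ μ)
    (g : X → ℂ) (hg : Measurable g) (hgn : ∀ x, ‖g x‖ = 1) (f : Lp ℂ 2 μ) :
    ‖wk μ S hS g hg hgn f‖ = ‖f‖ := by
  rw [show wk μ S hS g hg hgn f = (wk_memLp μ S hS g hg f hgn).toLp _ from rfl,
    Lp.norm_toLp _ (wk_memLp μ S hS g hg f hgn)]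
  have h1 : eLpNorm (fun x => g x * (f : X → ℂ) (S x)) 2 μ
      = eLpNorm (fun x => (f : X → ℂ) (S x)) 2 μ := by
    apply eLpNorm_congr_norm_ae
    filter_upwards with x
    rw [norm_mul, hgn x, one_mul]
  rw [h1, show (fun x => (f : X → ℂ) (S x)) = (f : X → ℂ) ∘ S from rfl,
    eLpNorm_comp_measurePreserving (Lp.aestronglyMeasurable f) hS, Lp.norm_def]

end aux

/-- Given commuting invertible measure-preserving transformations `T`, `S` of a
probability space, a compact abelian group `K`, a continuous automorphism `v` of `K`, and
measurable `a, φ : X → K` with `v(a(x)) = a(Sx) + φ(x) − φ(Tx)` a.e., the weighted Koopman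
operators `U_{T,χ∘v}` and `U_{T,χ}` are unitarily equivalent for every continuous
character `χ` of `K`. -/
theorem stmt_16
    {X : Type*} [MeasurableSpace X] (μ : Measure X) [IsProbabilityMeasure μ]
    (T S : X ≃ᵐ X) (hT : MeasurePreserving T μ μ) (hS : MeasurePreserving S μ μ)
    (hcomm : ∀ x : X, S (T x) = T (S x))
    {K : Type*} [AddCommGroup K] [TopologicalSpace K] [IsTopologicalAddGroup K]
    [CompactSpace K] [MeasurableSpace K] [BorelSpace K]
    (v : K ≃+ K) (hv : Continuous v)
    (a φ : X → K) (ha : Measurable a) (hφ : Measurable φ)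
    (hcocycle : ∀ᵐ x ∂μ, v (a x) = a (S x) + φ x - φ (T x))
    -- a continuous character `χ` of `K`, regarded as `ℂ`-valued
    (χ : K → ℂ) (hχcont : Continuous χ) (hχnorm : ∀ c : K, ‖χ c‖ = 1)
    (hχmul : ∀ c d : K, χ (c + d) = χ c * χ d)
    -- the weighted Koopman operators `U_{T,χ}` and `U_{T,χ∘v}`
    (Uχ Uχv : Lp ℂ 2 μ ≃ₗᵢ[ℂ] Lp ℂ 2 μ)
    (hUχ : ∀ f : Lp ℂ 2 μ, (Uχ f : X → ℂ) =ᵐ[μ] fun x => χ (a x) * f (T x))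
    (hUχv : ∀ f : Lp ℂ 2 μ, (Uχv f : X → ℂ) =ᵐ[μ] fun x => χ (v (a x)) * f (T x)) :
    ∃ W : Lp ℂ 2 μ ≃ₗᵢ[ℂ] Lp ℂ 2 μ, ∀ f : Lp ℂ 2 μ, W (Uχ f) = Uχv (W f) := by
  -- `conj (χ c) * χ c = 1`
  have hconj : ∀ c : K, (starRingEnd ℂ) (χ c) * χ c = 1 := by
    intro c
    rw [mul_comm, Complex.mul_conj, Complex.normSq_eq_norm_sq, hχnorm]
    norm_num
  have hSsymm : MeasurePreserving (⇑S.symm) μ μ := MeasurePreserving.symm S hS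
  -- the weight functions
  set g₀ : X → ℂ := fun x => χ (φ x) with hg₀def
  have hg₀m : Measurable g₀ := hχcont.measurable.comp hφ
  have hg₀n : ∀ x, ‖g₀ x‖ = 1 := fun x => hχnorm _
  set g₁ : X → ℂ := fun x => (starRingEnd ℂ) (χ (φ (S.symm x))) with hg₁def
  have hg₁m : Measurable g₁ :=
    continuous_star.measurable.comp (hχcont.measurable.comp (hφ.comp S.symm.measurable))
  have hg₁n : ∀ x, ‖g₁ x‖ = 1 := fun x => (norm_star _).trans (hχnorm _)
  set W₀ := wk μ S hS g₀ hg₀m hg₀n with hW₀def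
  set W₁ := wk μ S.symm hSsymm g₁ hg₁m hg₁n with hW₁def
  have hW₁W₀ : ∀ f, W₁ (W₀ f) = f := by
    intro f
    apply Lp.ext
    have h1 := wk_coeFn μ S.symm hSsymm g₁ hg₁m hg₁n (W₀ f)
    have h2 := hSsymm.quasiMeasurePreserving.ae_eq_comp (wk_coeFn μ S hS g₀ hg₀m hg₀n f)
    filter_upwards [h1, h2] with x hx1 hx2
    simp only [Function.comp_apply] at hx2
    rw [hx1, hx2, S.apply_symm_apply, ← mul_assoc]
    have hone : g₁ x * g₀ (S.symm x) = 1 := by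
      simp only [hg₀def, hg₁def]
      rw [hconj]
    rw [hone, one_mul]
  have hW₀W₁ : ∀ f, W₀ (W₁ f) = f := by
    intro f
    apply Lp.ext
    have h1 := wk_coeFn μ S hS g₀ hg₀m hg₀n (W₁ f)
    have h2 := hS.quasiMeasurePreserving.ae_eq_comp (wk_coeFn μ S.symm hSsymm g₁ hg₁m hg₁n f)
    filter_upwards [h1, h2] with x hx1 hx2
    simp only [Function.comp_apply] at hx2
    rw [hx1, hx2, S.symm_apply_apply, ← mul_assoc]
    have hone : g₀ x * g₁ (S x) = 1 := by
      simp only [hg₀def, hg₁def]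
      rw [S.symm_apply_apply, mul_comm, hconj]
    rw [hone, one_mul]
  let E : Lp ℂ 2 μ ≃ₗ[ℂ] Lp ℂ 2 μ :=
    LinearEquiv.ofLinear W₀ W₁ (LinearMap.ext fun f => hW₀W₁ f)
      (LinearMap.ext fun f => hW₁W₀ f)
  refine ⟨{ E with norm_map' := wk_norm μ S hS g₀ hg₀m hg₀n }, ?_⟩
  intro f
  show W₀ (Uχ f) = Uχv (W₀ f)
  apply Lp.ext
  have h1 := wk_coeFn μ S hS g₀ hg₀m hg₀n (Uχ f)
  have h2 := hS.quasiMeasurePreserving.ae_eq_comp (hUχ f)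
  have h3 := hUχv (W₀ f)
  have h4 := hT.quasiMeasurePreserving.ae_eq_comp (wk_coeFn μ S hS g₀ hg₀m hg₀n f)
  filter_upwards [h1, h2, h3, h4, hcocycle] with x hx1 hx2 hx3 hx4 hx5
  simp only [Function.comp_apply] at hx2 hx4
  rw [hx1, hx2, hx3, hx4, hcomm x]
  simp only [hg₀def]
  have key : χ (v (a x)) * χ (φ (T x)) = χ (φ x) * χ (a (S x)) := by
    rw [← hχmul, hx5, sub_add_cancel, ← hχmul, add_comm]
  rw [← mul_assoc, ← mul_assoc, key]
end
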